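/- For every integer n ≥ 1, the subgroup of G_n generated by the two elements a² and b is isomorphic to ℤ/nℤ × ℤ. -/

import Mathlib

namespace Stmt7

def a : FreeGroup (Fin 2) := FreeGroup.of 0
def b : FreeGroup (Fin 2) := FreeGroup.of 1

/-- The relators `a b a⁻¹ b` and `a^(2n)`. -/
def rels (n : ℕ) : Set (FreeGroup (Fin 2)) := {a * b * a⁻¹ * b, a ^ (2 * n)}

/-- The group `G_n = ⟨a, b ∣ a b a⁻¹ b, a^(2n)⟩`. -/
abbrev G (n : ℕ) := PresentedGroup (rels n)

/-- The image of `a` in `G_n`. -/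
def aG (n : ℕ) : G n := PresentedGroup.of 0

/-- The image of `b` in `G_n`. -/
def bG (n : ℕ) : G n := PresentedGroup.of 1

open Multiplicative SemidirectProduct

/-- The inversion automorphism of `Multiplicative ℤ`. -/
def invA : MulAut (Multiplicative ℤ) := MulEquiv.inv (Multiplicative ℤ)

lemma invA_apply (z : Multiplicative ℤ) : invA z = z⁻¹ := rfl

lemma invA_two_zpow (x : ℤ) : invA ^ (2 * x) = 1 := by
  have h2 : invA ^ (2 : ℤ) = 1 := by
    ext z
    show invA (invA z) = z
    simp [invA_apply]
  rw [zpow_mul, h2, one_zpow]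

/-- `x ↦ invA ^ x` as an additive hom. -/
def invAadd : ℤ →+ Additive (MulAut (Multiplicative ℤ)) :=
  MonoidHom.toAdditiveRight (zpowersHom (MulAut (Multiplicative ℤ)) invA)

lemma invAadd_prop (n : ℕ) : invAadd ((2 * n : ℕ) : ℤ) = 0 := by
  show Additive.ofMul (invA ^ (ofAdd ((2 * n : ℕ) : ℤ)).toAdd) = 0
  have h : invA ^ (((2 * n : ℕ) : ℤ)) = 1 := by
    push_cast
    exact invA_two_zpow n
  rw [toAdd_ofAdd, h]
  rfl

/-- `ZMod (2n) →+` version. -/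
def phiAdd (n : ℕ) : ZMod (2 * n) →+ Additive (MulAut (Multiplicative ℤ)) :=
  ZMod.lift (2 * n) ⟨invAadd, invAadd_prop n⟩

/-- The action of `ZMod (2n)` on `Multiplicative ℤ` by inversion. -/
def phi (n : ℕ) : Multiplicative (ZMod (2 * n)) →* MulAut (Multiplicative ℤ) :=
  AddMonoidHom.toMultiplicativeLeft (phiAdd n)

lemma phi_intCast (n : ℕ) (x : ℤ) :
    phi n (ofAdd ((x : ZMod (2 * n)))) = invA ^ x := by
  show Additive.toMul ((phiAdd n) ((ofAdd ((x : ZMod (2 * n)))).toAdd)) = invA ^ x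
  rw [toAdd_ofAdd, phiAdd, ZMod.lift_coe]
  rfl

/-- The model group `ℤ ⋊ ℤ/2n`. -/
abbrev M (n : ℕ) := Multiplicative ℤ ⋊[phi n] Multiplicative (ZMod (2 * n))

/-- Images of the generators in the model group. -/
def Fm (n : ℕ) : Fin 2 → M n := ![inr (ofAdd 1), inl (ofAdd 1)]

lemma relsOne (n : ℕ) : ∀ r ∈ rels n, FreeGroup.lift (Fm n) r = 1 := by
  intro r hr
  have h1 : (1 : ZMod (2 * n)) = ((1 : ℤ) : ZMod (2 * n)) := by push_cast; rfl
  rcases hr with h | h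
  · subst h
    simp only [a, b, map_mul, map_inv, FreeGroup.lift_apply_of, Fm, Matrix.cons_val_zero,
      Matrix.cons_val_one, Matrix.head_cons]
    rw [← map_inv inr, mul_assoc (inr (ofAdd 1)), ← mul_assoc (inr (ofAdd 1)),
      ← SemidirectProduct.inl_aut, ← map_mul]
    have h2 : (phi n) (ofAdd 1) (ofAdd 1) = ofAdd (-1) := by
      rw [h1, phi_intCast, zpow_one, invA_apply]
      rfl
    rw [h2]
    norm_num
  · rcases h with rfl
    simp only [a, map_pow, FreeGroup.lift_apply_of, Fm, Matrix.cons_val_zero]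
    rw [← map_pow, ← ofAdd_nsmul, nsmul_eq_mul, mul_one, ZMod.natCast_self]
    simp

/-- The homomorphism `G n →* M n`. -/
def psi (n : ℕ) : G n →* M n := PresentedGroup.toGroup (relsOne n)

lemma psi_aG (n : ℕ) : psi n (aG n) = inr (ofAdd 1) := by
  show psi n (PresentedGroup.of 0) = _
  rw [psi, PresentedGroup.toGroup.of]
  rfl

lemma psi_bG (n : ℕ) : psi n (bG n) = inl (ofAdd 1) := by
  show psi n (PresentedGroup.of 1) = _
  rw [psi, PresentedGroup.toGroup.of]
  rfl

lemma mk_rel_one (n : ℕ) : aG n * bG n * (aG n)⁻¹ * bG n = 1 := by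
  have h : PresentedGroup.mk (rels n) (a * b * a⁻¹ * b) = 1 :=
    (QuotientGroup.eq_one_iff _).mpr
      (Subgroup.subset_normalClosure (Set.mem_insert _ _))
  simpa [aG, bG, a, b, PresentedGroup.of, map_mul, map_inv] using h

lemma mk_rel_two (n : ℕ) : aG n ^ (2 * n) = 1 := by
  have h : PresentedGroup.mk (rels n) (a ^ (2 * n)) = 1 :=
    (QuotientGroup.eq_one_iff _).mpr
      (Subgroup.subset_normalClosure (Set.mem_insert_of_mem _ rfl))
  simpa [aG, a, PresentedGroup.of, map_pow] using h

lemma comm_ab (n : ℕ) : Commute (aG n ^ 2) (bG n) := by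
  have h2 : aG n * bG n * (aG n)⁻¹ = (bG n)⁻¹ :=
    eq_inv_of_mul_eq_one_left (mk_rel_one n)
  have h3 : aG n * bG n = (bG n)⁻¹ * aG n := by
    rw [← h2]; group
  have h4 : aG n * (bG n)⁻¹ * (aG n)⁻¹ = bG n := by
    have h := congrArg (fun z => z⁻¹) h2
    simp only [mul_inv_rev, inv_inv] at h
    rw [← mul_assoc] at h
    exact h
  have h5 : aG n * (bG n)⁻¹ = bG n * aG n := by
    conv_rhs => rw [← h4]
    group
  show aG n ^ 2 * bG n = bG n * aG n ^ 2
  calc aG n ^ 2 * bG n = aG n * (aG n * bG n) := by rw [pow_two, mul_assoc]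
    _ = aG n * ((bG n)⁻¹ * aG n) := by rw [h3]
    _ = (aG n * (bG n)⁻¹) * aG n := by rw [mul_assoc]
    _ = bG n * aG n * aG n := by rw [h5]
    _ = bG n * aG n ^ 2 := by rw [pow_two, mul_assoc]

/-- `x ↦ (aG n ^ 2) ^ x` as an additive hom. -/
def fzmAdd0 (n : ℕ) : ℤ →+ Additive (G n) :=
  MonoidHom.toAdditiveRight (zpowersHom (G n) (aG n ^ 2))

lemma fzmAdd0_prop (n : ℕ) : fzmAdd0 n ((n : ℕ) : ℤ) = 0 := by
  show Additive.ofMul ((aG n ^ 2) ^ (ofAdd ((n : ℕ) : ℤ)).toAdd) = 0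
  have h : (aG n ^ 2) ^ (((n : ℕ) : ℤ)) = 1 := by
    rw [zpow_natCast, ← pow_mul, mk_rel_two]
  rw [toAdd_ofAdd, h]
  rfl

def fzmAdd (n : ℕ) : ZMod n →+ Additive (G n) :=
  ZMod.lift n ⟨fzmAdd0 n, fzmAdd0_prop n⟩

/-- The homomorphism `ZMod n →* G n` sending `1` to `(aG n)^2`. -/
def fzm (n : ℕ) : Multiplicative (ZMod n) →* G n :=
  AddMonoidHom.toMultiplicativeLeft (fzmAdd n)

lemma fzm_intCast (n : ℕ) (x : ℤ) :
    fzm n (ofAdd ((x : ZMod n))) = (aG n ^ 2) ^ x := by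
  show Additive.toMul ((fzmAdd n) ((ofAdd ((x : ZMod n))).toAdd)) = (aG n ^ 2) ^ x
  rw [toAdd_ofAdd, fzmAdd, ZMod.lift_coe]
  rfl

lemma fzm_comm (n : ℕ) (m : Multiplicative (ZMod n)) (g : Multiplicative ℤ) :
    Commute (fzm n m) (zpowersHom (G n) (bG n) g) := by
  obtain ⟨x, hx⟩ := ZMod.intCast_surjective (m.toAdd)
  have hm : m = ofAdd ((x : ZMod n)) := by rw [hx, ofAdd_toAdd]
  rw [hm, fzm_intCast, zpowersHom_apply]
  exact ((comm_ab n).zpow_left x).zpow_right _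

/-- The homomorphism `Multiplicative (ZMod n × ℤ) →* G n`. -/
def q (n : ℕ) : Multiplicative (ZMod n × ℤ) →* G n :=
  (MonoidHom.noncommCoprod (fzm n) (zpowersHom (G n) (bG n)) (fzm_comm n)).comp
    (MulEquiv.prodMultiplicative (G := ZMod n) (H := ℤ)).toMonoidHom

lemma q_apply (n : ℕ) (c : ZMod n) (k : ℤ) :
    q n (ofAdd (c, k)) = fzm n (ofAdd c) * bG n ^ k := by
  rfl

lemma psi_q (n : ℕ) (x k : ℤ) :
    psi n (q n (ofAdd ((x : ZMod n), k)))
      = inl (ofAdd k) * inr (ofAdd (((2 * x : ℤ) : ZMod (2 * n)))) := by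
  rw [q_apply, fzm_intCast, map_mul, map_zpow, map_zpow, map_pow, psi_aG, psi_bG,
    ← map_pow, ← map_zpow, ← map_zpow]
  have e1 : ((ofAdd (1 : ZMod (2 * n))) ^ (2 : ℕ)) ^ x
      = ofAdd (((2 * x : ℤ) : ZMod (2 * n))) := by
    rw [← ofAdd_nsmul, ← ofAdd_zsmul]
    congr 1
    simp only [nsmul_eq_mul, Nat.cast_ofNat, mul_one, zsmul_eq_mul]
    push_cast
    ring
  have e2 : (ofAdd (1 : ℤ)) ^ k = ofAdd k := by
    rw [← ofAdd_zsmul]; simp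
  rw [e1, e2]
  have hphi : phi n (ofAdd (((2 * x : ℤ) : ZMod (2 * n)))) = 1 := by
    rw [phi_intCast]; exact invA_two_zpow x
  set H := ofAdd (((2 * x : ℤ) : ZMod (2 * n)))
  set Z := ofAdd k
  calc inr (φ := phi n) H * inl Z
      = inr H * inl Z * inr H⁻¹ * inr H := by
        rw [mul_assoc (inr H * inl Z), ← map_mul, inv_mul_cancel, map_one, mul_one]
    _ = inl ((phi n H) Z) * inr H := by rw [SemidirectProduct.inl_aut]
    _ = inl Z * inr H := by rw [hphi, MulAut.one_apply]

lemma q_inj (n : ℕ) (hn : 1 ≤ n) : Function.Injective (q n) := by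
  haveI : NeZero n := ⟨by omega⟩
  rw [injective_iff_map_eq_one]
  intro z hz
  obtain ⟨x, hx⟩ := ZMod.intCast_surjective (z.toAdd.1)
  have hz' : z = ofAdd ((x : ZMod n), z.toAdd.2) := by
    rw [hx, Prod.mk.eta, ofAdd_toAdd]
  rw [hz'] at hz ⊢
  have h1 : psi n (q n (ofAdd ((x : ZMod n), z.toAdd.2))) = 1 := by rw [hz, map_one]
  rw [psi_q] at h1
  have hleft := congrArg SemidirectProduct.left h1
  have hright := congrArg SemidirectProduct.right h1
  simp only [mul_left, mul_right, left_inl, right_inl, left_inr, right_inr, map_one,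
    MulAut.one_apply, mul_one, one_mul] at hleft hright
  -- hleft : ofAdd z.toAdd.2 = 1, hright : ofAdd ((2*x : ℤ) : ZMod (2*n)) = 1
  have hk : z.toAdd.2 = 0 := by
    have := congrArg Multiplicative.toAdd hleft
    simpa using this
  have h2x : ((2 * x : ℤ) : ZMod (2 * n)) = 0 := by
    have := congrArg Multiplicative.toAdd hright
    simpa using this
  have hdvd : ((2 * n : ℕ) : ℤ) ∣ 2 * x := by
    rw [← ZMod.intCast_zmod_eq_zero_iff_dvd]
    exact_mod_cast h2x
  have hx0 : ((x : ℤ) : ZMod n) = 0 := by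
    rw [ZMod.intCast_zmod_eq_zero_iff_dvd]
    obtain ⟨c, hc⟩ := hdvd
    exact ⟨c, by push_cast at hc; linarith⟩
  rw [hx0, hk]
  rfl

set_option maxHeartbeats 1000000 in
lemma q_range (n : ℕ) : (q n).range = Subgroup.closure {aG n ^ 2, bG n} := by
  apply le_antisymm
  · rintro g ⟨z, rfl⟩
    obtain ⟨x, hx⟩ := ZMod.intCast_surjective (z.toAdd.1)
    have hz' : z = ofAdd ((x : ZMod n), z.toAdd.2) := by rw [hx, Prod.mk.eta, ofAdd_toAdd]
    rw [hz', q_apply, fzm_intCast]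
    set S := Subgroup.closure {aG n ^ 2, bG n} with hS
    have h1 : aG n ^ 2 ∈ S := Subgroup.subset_closure (Set.mem_insert _ _)
    have h2 : bG n ∈ S := Subgroup.subset_closure (Set.mem_insert_of_mem _ rfl)
    exact S.mul_mem (S.zpow_mem h1 x) (S.zpow_mem h2 _)
  · rw [Subgroup.closure_le]
    intro g hg
    rcases hg with rfl | hg
    · refine ⟨ofAdd (((1 : ℤ) : ZMod n), 0), ?_⟩
      rw [q_apply, fzm_intCast, zpow_one, zpow_zero, mul_one]
    · rcases hg with rfl
      refine ⟨ofAdd ((0 : ZMod n), 1), ?_⟩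
      rw [q_apply, zpow_one]
      have : (ofAdd (0 : ZMod n)) = 1 := rfl
      rw [this, map_one, one_mul]

/-- For every `n ≥ 1`, the subgroup of `G_n` generated by `a²` and `b` is isomorphic to
`ℤ/nℤ × ℤ`. -/
theorem closure_iso (n : ℕ) (hn : 1 ≤ n) :
    Nonempty ((Subgroup.closure {(aG n) ^ 2, bG n} : Subgroup (G n))
      ≃* Multiplicative (ZMod n × ℤ)) :=
  ⟨(MulEquiv.subgroupCongr (q_range n)).symm.trans
    (MonoidHom.ofInjective (q_inj n hn)).symm⟩

end Stmt7
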